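/- In any complexity-optimal structure S ∈ 𝒮_n^co (one with exactly 3n - 6 computation nodes), every non-sink node has exactly two outgoing edges. -/
import Mathlib


/-- `chainLen edge k u v` : there is a directed walk of length `k` (number of
edges) from `u` to `v`. -/
def chainLen {V : Type} (edge : V → V → Prop) : ℕ → V → V → Prop
  | 0, u, v => u = v
  | k + 1, u, v => ∃ w, edge u w ∧ chainLen edge k w v

/-- `IsDPath edge u v p` : the list of vertices `p` is a directed path (walk)
from `u` to `v` along `edge`. -/
def IsDPath {V : Type} (edge : V → V → Prop) (u v : V) (p : List V) : Prop :=
  List.Chain' edge p ∧ p.head? = some u ∧ p.getLast? = some v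

/-- A structure used for computing `y` (Definition 2 of the paper): a finite DAG
whose in-degree-0 nodes are exactly the inputs `x 1, …, x n`, in which every
non-input node has in-degree exactly 2 and the in-subgraph of every node is a
directed full binary tree (no two distinct nodes having the same subtree), and
whose sinks are exactly `y 1, …, y n`, where the in-subtree of `y j` has leaf
set `{x 1, …, x n} \ {x j}`. -/
structure YStruct (n : ℕ) where
  V : Type
  finite : Finite V
  edge : V → V → Prop
  x : Fin n ↪ V
  y : Fin n ↪ V
  /-- a node has no incoming edge iff it is an input node -/
  source_iff : ∀ v, (∀ u, ¬ edge u v) ↔ v ∈ Set.range x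
  /-- a node has no outgoing edge iff it is an output node -/
  sink_iff : ∀ v, (∀ u, ¬ edge v u) ↔ v ∈ Set.range y
  /-- every non-input (computation) node has exactly two incoming edges -/
  indeg : ∀ v, v ∉ Set.range x → {u | edge u v}.ncard = 2
  /-- the graph is acyclic -/
  acyclic : ∀ v, ¬ Relation.TransGen edge v v
  /-- the in-subgraph `E(a,S)` of every node `a` is a tree: every strict
  ancestor `v` of `a` has exactly one outgoing edge towards `a` -/
  tree_like : ∀ a v, Relation.TransGen edge v a →
    {w | edge v w ∧ Relation.ReflTransGen edge w a}.ncard = 1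
  /-- no two distinct nodes have the same subtree -/
  distinct : ∀ a b, a ∉ Set.range x → b ∉ Set.range x →
    {u | edge u a} = {u | edge u b} → a = b
  /-- the in-subtree of `y j` has leaf set `{x i : i ≠ j}` -/
  leaf_set : ∀ i j, Relation.ReflTransGen edge (x i) (y j) ↔ i ≠ j

/-- The complexity of a structure: the number of computation (non-input) nodes. -/
noncomputable def YStruct.complexity {n : ℕ} (S : YStruct n) : ℕ :=
  {v : S.V | v ∉ Set.range S.x}.ncard

/-- The latency of a structure: the length of the longest directed path. -/
noncomputable def YStruct.latency {n : ℕ} (S : YStruct n) : ℕ :=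
  sSup {k | ∃ u v, chainLen S.edge k u v}


open Classical

namespace COD

/-- Binary trees with ℕ-labeled leaves. -/
inductive BT : Type
  | leaf : ℕ → BT
  | node : BT → BT → BT
deriving DecidableEq

namespace BT

def leaves : BT → Finset ℕ
  | leaf i => {i}
  | node l r => leaves l ∪ leaves r

/-- distinct leaves throughout -/
def dl : BT → Prop
  | leaf _ => True
  | node l r => Disjoint (leaves l) (leaves r) ∧ dl l ∧ dl r

def isNd : BT → Prop
  | leaf _ => False
  | node _ _ => True

/-- internal (non-leaf) subtrees, including the tree itself -/
def Sub : BT → Finset BT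
  | leaf _ => ∅
  | node l r => insert (node l r) (Sub l ∪ Sub r)

def children : BT → Finset BT
  | leaf _ => ∅
  | node l r => {l, r}

def isChild (t s : BT) : Prop := t ∈ children s

/-- `s` is a cherry for label `i`: one of its children is `leaf i`. -/
def cher (i : ℕ) : BT → Prop
  | leaf _ => False
  | node l r => l = leaf i ∨ r = leaf i

/-- delete leaf `i` and contract the resulting unary node -/
def del (i : ℕ) : BT → BT
  | leaf j => leaf j
  | node l r =>
      if l = leaf i then r
      else if r = leaf i then l
      else node (del i l) (del i r)

lemma leaves_nonempty : ∀ t : BT, (leaves t).Nonempty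
  | leaf i => ⟨i, by simp [leaves]⟩
  | node l r => by
      obtain ⟨a, ha⟩ := leaves_nonempty l
      exact ⟨a, by simp [leaves, ha]⟩

lemma isNd_iff {t : BT} : isNd t ↔ ∃ l r, t = node l r := by
  cases t <;> simp [isNd]


lemma mem_sub_node {l r s : BT} :
    s ∈ Sub (node l r) ↔ s = node l r ∨ s ∈ Sub l ∨ s ∈ Sub r := by
  simp [Sub]

lemma sub_left {l r : BT} : Sub l ⊆ Sub (node l r) := by
  intro u hu; exact mem_sub_node.mpr (Or.inr (Or.inl hu))

lemma sub_right {l r : BT} : Sub r ⊆ Sub (node l r) := by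
  intro u hu; exact mem_sub_node.mpr (Or.inr (Or.inr hu))

lemma del_node_left {i : ℕ} {r : BT} : del i (node (leaf i) r) = r := by simp [del]

lemma del_node_right {i : ℕ} {l : BT} (h : l ≠ leaf i) : del i (node l (leaf i)) = l := by
  simp [del, h]

lemma del_node {i : ℕ} {l r : BT} (hl : l ≠ leaf i) (hr : r ≠ leaf i) :
    del i (node l r) = node (del i l) (del i r) := by simp [del, hl, hr]

lemma two_le_card_leaves {t : BT} (hd : dl t) (ht : isNd t) :
    2 ≤ (leaves t).card := by
  obtain ⟨l, r, rfl⟩ := isNd_iff.mp ht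
  obtain ⟨hdis, _, _⟩ := hd
  have h1 : 1 ≤ (leaves l).card := Finset.card_pos.mpr (leaves_nonempty l)
  have h2 : 1 ≤ (leaves r).card := Finset.card_pos.mpr (leaves_nonempty r)
  have := Finset.card_union_of_disjoint hdis
  simp only [leaves, this]
  omega

lemma isNd_of_two_le {t : BT} (h : 2 ≤ (leaves t).card) : isNd t := by
  cases t with
  | leaf i => simp [leaves] at h
  | node l r => trivial

lemma card_leaves_leaf {i : ℕ} : (leaves (leaf i)).card = 1 := by simp [leaves]

lemma mem_sub_isNd : ∀ {t s : BT}, s ∈ Sub t → isNd s := by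
  intro t
  induction t with
  | leaf i => intro s h; simp [Sub] at h
  | node l r ihl ihr =>
      intro s h
      simp only [Sub, Finset.mem_insert, Finset.mem_union] at h
      rcases h with rfl | h | h
      · trivial
      · exact ihl h
      · exact ihr h

lemma self_mem_sub {t : BT} (ht : isNd t) : t ∈ Sub t := by
  obtain ⟨l, r, rfl⟩ := isNd_iff.mp ht
  simp [Sub]

lemma leaves_sub : ∀ {t s : BT}, s ∈ Sub t → leaves s ⊆ leaves t := by
  intro t
  induction t with
  | leaf i => intro s h; simp [Sub] at h
  | node l r ihl ihr =>
      intro s h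
      simp only [Sub, Finset.mem_insert, Finset.mem_union] at h
      rcases h with rfl | h | h
      · exact subset_rfl
      · exact (ihl h).trans (by simp [leaves, Finset.subset_union_left])
      · exact (ihr h).trans (by simp [leaves, Finset.subset_union_right])

lemma sub_trans : ∀ {t s : BT}, s ∈ Sub t → Sub s ⊆ Sub t := by
  intro t
  induction t with
  | leaf i => intro s h; simp [Sub] at h
  | node l r ihl ihr =>
      intro s h
      simp only [Sub, Finset.mem_insert, Finset.mem_union] at h
      rcases h with rfl | h | h
      · exact subset_rfl
      · exact (ihl h).trans (by intro u hu; simp [Sub, Finset.mem_union, hu])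
      · exact (ihr h).trans (by intro u hu; simp [Sub, Finset.mem_union, hu])

lemma child_mem_sub {t s c : BT} (hs : s ∈ Sub t) (hc : isChild c s) (hcn : isNd c) :
    c ∈ Sub t := by
  obtain ⟨l, r, rfl⟩ := isNd_iff.mp (mem_sub_isNd hs)
  have : c ∈ Sub (node l r) := by
    simp only [isChild, children, Finset.mem_insert, Finset.mem_singleton] at hc
    rcases hc with rfl | rfl
    · simp only [Sub, Finset.mem_insert, Finset.mem_union]
      exact Or.inr (Or.inl (self_mem_sub hcn))
    · simp only [Sub, Finset.mem_insert, Finset.mem_union]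
      exact Or.inr (Or.inr (self_mem_sub hcn))
  exact sub_trans hs this

lemma parent_exists : ∀ {t s : BT}, s ∈ Sub t → s ≠ t → ∃ u ∈ Sub t, isChild s u := by
  intro t
  induction t with
  | leaf i => intro s h; simp [Sub] at h
  | node l r ihl ihr =>
      intro s h hne
      simp only [Sub, Finset.mem_insert, Finset.mem_union] at h
      rcases h with rfl | h | h
      · exact absurd rfl hne
      · by_cases hsl : s = l
        · exact ⟨node l r, by simp [Sub], by simp [isChild, children, hsl]⟩
        · obtain ⟨u, hu, hcu⟩ := ihl h hsl
          exact ⟨u, by simp only [Sub, Finset.mem_insert, Finset.mem_union]; exact Or.inr (Or.inl hu), hcu⟩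
      · by_cases hsr : s = r
        · exact ⟨node l r, by simp [Sub], by simp [isChild, children, hsr]⟩
        · obtain ⟨u, hu, hcu⟩ := ihr h hsr
          exact ⟨u, by simp only [Sub, Finset.mem_insert, Finset.mem_union]; exact Or.inr (Or.inr hu), hcu⟩

lemma dl_of_sub : ∀ {t s : BT}, dl t → s ∈ Sub t → dl s := by
  intro t
  induction t with
  | leaf i => intro s _ h; simp [Sub] at h
  | node l r ihl ihr =>
      intro s hd h
      simp only [Sub, Finset.mem_insert, Finset.mem_union] at h
      rcases h with rfl | h | h
      · exact hd
      · exact ihl hd.2.1 h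
      · exact ihr hd.2.2 h

lemma sub_proper_leaves : ∀ {t s : BT}, dl t → s ∈ Sub t → leaves s = leaves t → s = t := by
  intro t
  induction t with
  | leaf i => intro s _ h; simp [Sub] at h
  | node l r ihl ihr =>
      intro s hd h hl
      simp only [Sub, Finset.mem_insert, Finset.mem_union] at h
      rcases h with rfl | h | h
      · rfl
      · exfalso
        obtain ⟨a, ha⟩ := leaves_nonempty r
        have hsl : leaves s ⊆ leaves l := leaves_sub h
        have : a ∈ leaves s := by rw [hl]; simp [leaves, ha]
        exact (Finset.disjoint_left.mp hd.1) (hsl this) ha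
      · exfalso
        obtain ⟨a, ha⟩ := leaves_nonempty l
        have hsr : leaves s ⊆ leaves r := leaves_sub h
        have : a ∈ leaves s := by rw [hl]; simp [leaves, ha]
        exact (Finset.disjoint_left.mp hd.1) ha (hsr this)

lemma cher_mem_leaves {i : ℕ} : ∀ {s : BT}, cher i s → i ∈ leaves s := by
  intro s h
  cases s with
  | leaf j => simp [cher] at h
  | node l r =>
      rcases h with rfl | rfl
      · simp [leaves]
      · simp [leaves]

lemma cherry_exists {i : ℕ} : ∀ {t : BT}, isNd t → i ∈ leaves t → ∃ c ∈ Sub t, cher i c := by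
  intro t
  induction t with
  | leaf j => intro h; simp [isNd] at h
  | node l r ihl ihr =>
      intro _ hi
      simp only [leaves, Finset.mem_union] at hi
      rcases hi with hi | hi
      · cases l with
        | leaf j =>
            have hji : j = i := by simpa [leaves, eq_comm] using hi
            exact ⟨node (leaf j) r, by simp [Sub], Or.inl (by rw [hji])⟩
        | node a b =>
            obtain ⟨c, hc, hcc⟩ := ihl trivial hi
            exact ⟨c, sub_left hc, hcc⟩
      · cases r with
        | leaf j =>
            have hji : j = i := by simpa [leaves, eq_comm] using hi
            exact ⟨node l (leaf j), by simp [Sub], Or.inr (by rw [hji])⟩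
        | node a b =>
            obtain ⟨c, hc, hcc⟩ := ihr trivial hi
            exact ⟨c, sub_right hc, hcc⟩

lemma del_of_not_mem {i : ℕ} : ∀ {t : BT}, i ∉ leaves t → del i t = t := by
  intro t
  induction t with
  | leaf j => intro _; rfl
  | node l r ihl ihr =>
      intro h
      simp only [leaves, Finset.mem_union, not_or] at h
      have hl : l ≠ leaf i := by
        intro e; subst e; simp [leaves] at h
      have hr : r ≠ leaf i := by
        intro e; subst e; simp [leaves] at h
      simp [del, hl, hr, ihl h.1, ihr h.2]

lemma leaves_del_subset {i : ℕ} : ∀ {t : BT}, leaves (del i t) ⊆ leaves t := by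
  intro t
  induction t with
  | leaf j => simp [del]
  | node l r ihl ihr =>
      by_cases hl : l = leaf i
      · subst hl; simp only [del, if_pos rfl]; simp [leaves]
      · by_cases hr : r = leaf i
        · subst hr; simp only [del, if_neg hl, if_pos rfl]; simp [leaves]
        · simp only [del, if_neg hl, if_neg hr]
          intro a ha
          simp only [leaves, Finset.mem_union] at ha ⊢
          rcases ha with ha | ha
          · exact Or.inl (ihl ha)
          · exact Or.inr (ihr ha)

lemma leaves_del {i : ℕ} : ∀ {t : BT}, dl t → t ≠ leaf i → leaves (del i t) = (leaves t).erase i := by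
  intro t
  induction t with
  | leaf j =>
      intro _ hne
      have hji : j ≠ i := fun e => hne (by rw [e])
      show leaves (leaf j) = ({j} : Finset ℕ).erase i
      rw [Finset.erase_eq_of_notMem (by simp [Ne.symm hji])]
      rfl
  | node l r ihl ihr =>
      intro hd _
      by_cases hl : l = leaf i
      · subst hl
        simp only [del, if_pos rfl]
        have hir : i ∉ leaves r := by
          have := hd.1
          simp only [leaves] at this
          exact fun h => (Finset.disjoint_left.mp this (by simp) h)
        rw [show leaves (node (leaf i) r) = {i} ∪ leaves r from rfl]
        rw [Finset.erase_union_distrib]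
        simp [Finset.erase_singleton, Finset.erase_eq_of_notMem hir]
      · by_cases hr : r = leaf i
        · subst hr
          simp only [del, if_neg hl, if_pos rfl]
          have hil : i ∉ leaves l := by
            have := hd.1
            simp only [leaves] at this
            exact fun h => (Finset.disjoint_left.mp this h (by simp))
          rw [show leaves (node l (leaf i)) = leaves l ∪ {i} from rfl]
          rw [Finset.erase_union_distrib]
          simp [Finset.erase_singleton, Finset.erase_eq_of_notMem hil]
        · simp only [del, if_neg hl, if_neg hr]
          rw [show leaves (node (del i l) (del i r)) = leaves (del i l) ∪ leaves (del i r) from rfl]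
          rw [ihl hd.2.1 hl, ihr hd.2.2 hr,
            show leaves (node l r) = leaves l ∪ leaves r from rfl,
            Finset.erase_union_distrib]

lemma dl_del {i : ℕ} : ∀ {t : BT}, dl t → dl (del i t) := by
  intro t
  induction t with
  | leaf j => intro h; exact h
  | node l r ihl ihr =>
      intro hd
      by_cases hl : l = leaf i
      · subst hl; simp only [del, if_pos rfl]; exact hd.2.2
      · by_cases hr : r = leaf i
        · subst hr; simp only [del, if_neg hl, if_pos rfl]; exact hd.2.1
        · simp only [del, if_neg hl, if_neg hr]
          refine ⟨?_, ihl hd.2.1, ihr hd.2.2⟩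
          exact Finset.disjoint_of_subset_left leaves_del_subset
            (Finset.disjoint_of_subset_right leaves_del_subset hd.1)

lemma sub_del {i : ℕ} : ∀ {t : BT}, dl t →
    Sub (del i t) = ((Sub t).image (del i)).filter isNd := by
  intro t
  induction t with
  | leaf j => intro _; simp [del, Sub]
  | node l r ihl ihr =>
      intro hd
      have hnotl : ∀ s ∈ Sub l, i ∈ leaves r → del i s = s := by
        intro s hs hir
        exact del_of_not_mem (fun hmem =>
          Finset.disjoint_left.mp hd.1 (leaves_sub hs hmem) hir)
      by_cases hl : l = leaf i
      · subst hl
        rw [del_node_left]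
        have hir : i ∉ leaves r := fun h =>
          Finset.disjoint_left.mp hd.1 (by simp [leaves]) h
        have hid : ∀ s ∈ Sub r, del i s = s := fun s hs =>
          del_of_not_mem (fun hmem => hir (leaves_sub hs hmem))
        ext s
        simp only [Finset.mem_filter, Finset.mem_image]
        constructor
        · intro hs
          exact ⟨⟨s, sub_right hs, hid s hs⟩, mem_sub_isNd hs⟩
        · rintro ⟨⟨u, hu, rfl⟩, hnd⟩
          rcases mem_sub_node.mp hu with rfl | hu | hu
          · rw [del_node_left] at hnd ⊢
            exact self_mem_sub hnd
          · simp [Sub] at hu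
          · rw [hid u hu]; exact hu
      · by_cases hr : r = leaf i
        · subst hr
          rw [del_node_right hl]
          have hil : i ∉ leaves l := fun h =>
            Finset.disjoint_left.mp hd.1 h (by simp [leaves])
          have hid : ∀ s ∈ Sub l, del i s = s := fun s hs =>
            del_of_not_mem (fun hmem => hil (leaves_sub hs hmem))
          ext s
          simp only [Finset.mem_filter, Finset.mem_image]
          constructor
          · intro hs
            exact ⟨⟨s, sub_left hs, hid s hs⟩, mem_sub_isNd hs⟩
          · rintro ⟨⟨u, hu, rfl⟩, hnd⟩
            rcases mem_sub_node.mp hu with rfl | hu | hu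
            · rw [del_node_right hl] at hnd ⊢
              exact self_mem_sub hnd
            · rw [hid u hu]; exact hu
            · simp [Sub] at hu
        · rw [del_node hl hr]
          ext s
          simp only [Finset.mem_filter, Finset.mem_image]
          constructor
          · intro hs
            rcases mem_sub_node.mp hs with rfl | hs | hs
            · exact ⟨⟨node l r, self_mem_sub trivial, (del_node hl hr).symm ▸ rfl⟩, trivial⟩
            · rw [ihl hd.2.1] at hs
              simp only [Finset.mem_filter, Finset.mem_image] at hs
              obtain ⟨⟨u, hu, rfl⟩, hnd⟩ := hs
              exact ⟨⟨u, sub_left hu, rfl⟩, hnd⟩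
            · rw [ihr hd.2.2] at hs
              simp only [Finset.mem_filter, Finset.mem_image] at hs
              obtain ⟨⟨u, hu, rfl⟩, hnd⟩ := hs
              exact ⟨⟨u, sub_right hu, rfl⟩, hnd⟩
          · rintro ⟨⟨u, hu, rfl⟩, hnd⟩
            rcases mem_sub_node.mp hu with rfl | hu | hu
            · rw [del_node hl hr]
              exact self_mem_sub trivial
            · apply sub_left
              rw [ihl hd.2.1]
              simp only [Finset.mem_filter, Finset.mem_image]
              exact ⟨⟨u, hu, rfl⟩, hnd⟩
            · apply sub_right
              rw [ihr hd.2.2]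
              simp only [Finset.mem_filter, Finset.mem_image]
              exact ⟨⟨u, hu, rfl⟩, hnd⟩

end BT

end COD

namespace COD
open BT

/-- A valid family of trees: tree `T j` has leaf set `I ∖ {j}`, distinct leaves. -/
def Valid (I : Finset ℕ) (T : ℕ → BT) : Prop :=
  ∀ j ∈ I, dl (T j) ∧ leaves (T j) = I.erase j

/-- all internal subtrees occurring in the family -/
noncomputable def UU (I : Finset ℕ) (T : ℕ → BT) : Finset BT :=
  I.biUnion fun j => Sub (T j)

variable {I : Finset ℕ} {T : ℕ → BT}

lemma mem_UU {s : BT} : s ∈ UU I T ↔ ∃ j ∈ I, s ∈ Sub (T j) := by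
  simp [UU]

lemma root_isNd (hval : Valid I T) (h3 : 3 ≤ I.card) {j : ℕ} (hj : j ∈ I) :
    isNd (T j) := by
  apply isNd_of_two_le
  rw [(hval j hj).2, Finset.card_erase_of_mem hj]
  omega

lemma root_mem (hval : Valid I T) (h3 : 3 ≤ I.card) {j : ℕ} (hj : j ∈ I) :
    T j ∈ UU I T :=
  mem_UU.mpr ⟨j, hj, self_mem_sub (root_isNd hval h3 hj)⟩

lemma roots_ne (hval : Valid I T) {j k : ℕ} (hj : j ∈ I) (hk : k ∈ I) (hjk : j ≠ k) :
    T j ≠ T k := by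
  intro h
  have h1 := (hval j hj).2
  have h2 := (hval k hk).2
  rw [h, h2] at h1
  have : k ∈ I.erase j := Finset.mem_erase.mpr ⟨Ne.symm hjk, hk⟩
  rw [← h1] at this
  exact (Finset.mem_erase.mp this).1 rfl

lemma root_not_sub (hval : Valid I T) {j k : ℕ} (hj : j ∈ I) (hk : k ∈ I) (hjk : j ≠ k) :
    T j ∉ Sub (T k) := by
  intro h
  have hsub : leaves (T j) ⊆ leaves (T k) := leaves_sub h
  rw [(hval j hj).2, (hval k hk).2] at hsub
  have : k ∈ I.erase j := Finset.mem_erase.mpr ⟨Ne.symm hjk, hk⟩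
  exact (Finset.mem_erase.mp (hsub this)).1 rfl

lemma i_mem_leaves_root (hval : Valid I T) {i k : ℕ} (hi : i ∈ I) (hk : k ∈ I)
    (hik : i ≠ k) : i ∈ leaves (T k) := by
  rw [(hval k hk).2]; exact Finset.mem_erase.mpr ⟨hik, hi⟩

lemma valid_del (hval : Valid I T) (h3 : 3 ≤ I.card) {i : ℕ} (hi : i ∈ I) :
    Valid (I.erase i) (fun k => del i (T k)) := by
  intro k hk
  obtain ⟨hki, hkI⟩ := Finset.mem_erase.mp hk
  obtain ⟨hd, hlv⟩ := hval k hkI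
  refine ⟨dl_del hd, ?_⟩
  have hne : T k ≠ leaf i := by
    intro e
    have := root_isNd hval h3 hkI
    rw [e] at this
    exact this
  rw [leaves_del hd hne, hlv]
  ext a
  simp only [Finset.mem_erase]
  tauto

lemma UU_del_subset (hval : Valid I T) {i : ℕ} (hi : i ∈ I) :
    UU (I.erase i) (fun k => del i (T k)) ⊆
      ((UU I T).filter fun s => ¬ cher i s ∧ s ≠ T i).image (del i) := by
  intro t' ht'
  obtain ⟨k, hk, hmem⟩ := mem_UU.mp ht'
  obtain ⟨hki, hkI⟩ := Finset.mem_erase.mp hk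
  obtain ⟨hd, _⟩ := hval k hkI
  rw [sub_del hd] at hmem
  simp only [Finset.mem_filter, Finset.mem_image] at hmem
  obtain ⟨⟨u, hu, rfl⟩, hnd⟩ := hmem
  have huU : u ∈ UU I T := mem_UU.mpr ⟨k, hkI, hu⟩
  have hune : u ≠ T i := fun e => root_not_sub hval hi hkI (Ne.symm hki) (e ▸ hu)
  by_cases hch : cher i u
  · -- replace by the sibling
    obtain ⟨l, r, rfl⟩ := isNd_iff.mp (mem_sub_isNd hu)
    have hdu : dl (node l r) := dl_of_sub hd hu
    rcases hch with rfl | hre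
    · -- u = node (leaf i) r, del = r
      rw [del_node_left] at hnd ⊢
      have hir : i ∉ leaves r := fun h =>
        Finset.disjoint_left.mp hdu.1 (by simp [leaves]) h
      have hrsub : r ∈ Sub (T k) := child_mem_sub hu (by simp [isChild, children]) hnd
      refine Finset.mem_image.mpr ⟨r, ?_, del_of_not_mem hir⟩
      refine Finset.mem_filter.mpr ⟨mem_UU.mpr ⟨k, hkI, hrsub⟩, ?_, ?_⟩
      · exact fun hc => hir (cher_mem_leaves hc)
      · exact fun e => root_not_sub hval hi hkI (Ne.symm hki) (e ▸ hrsub)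
    · by_cases hle : l = leaf i
      · -- both children leaf i: impossible by dl
        exfalso
        rw [hle, hre] at hdu
        have := hdu.1
        simp [leaves] at this
      · rw [hre] at hnd ⊢
        rw [del_node_right hle] at hnd ⊢
        have hil : i ∉ leaves l := by
          rw [hre] at hdu
          exact fun h => Finset.disjoint_left.mp hdu.1 h (by simp [leaves])
        have hlsub : l ∈ Sub (T k) :=
          child_mem_sub hu (by simp [isChild, children]) hnd
        refine Finset.mem_image.mpr ⟨l, ?_, del_of_not_mem hil⟩
        refine Finset.mem_filter.mpr ⟨mem_UU.mpr ⟨k, hkI, hlsub⟩, ?_, ?_⟩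
        · exact fun hc => hil (cher_mem_leaves hc)
        · exact fun e => root_not_sub hval hi hkI (Ne.symm hki) (e ▸ hlsub)
  · exact Finset.mem_image.mpr ⟨u, Finset.mem_filter.mpr ⟨huU, hch, hune⟩, rfl⟩

lemma two_cherries (hval : Valid I T) (h3 : 3 ≤ I.card) {i : ℕ} (hi : i ∈ I) :
    ∃ c1 c2, c1 ∈ UU I T ∧ c2 ∈ UU I T ∧ cher i c1 ∧ cher i c2 ∧ c1 ≠ c2 := by
  have hcherk : ∀ k ∈ I.erase i, ∃ c ∈ Sub (T k), cher i c := by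
    intro k hk
    obtain ⟨hki, hkI⟩ := Finset.mem_erase.mp hk
    exact cherry_exists (root_isNd hval h3 hkI)
      (i_mem_leaves_root hval hi hkI (Ne.symm hki))
  by_contra hcon
  push_neg at hcon
  -- all cherries in UU are equal
  obtain ⟨k0, hk0⟩ : (I.erase i).Nonempty := by
    apply Finset.card_pos.mp
    rw [Finset.card_erase_of_mem hi]
    omega
  obtain ⟨c0, hc0sub, hc0ch⟩ := hcherk k0 hk0
  have hc0U : c0 ∈ UU I T := mem_UU.mpr ⟨k0, (Finset.mem_erase.mp hk0).2, hc0sub⟩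
  have hall : ∀ k ∈ I.erase i, c0 ∈ Sub (T k) := by
    intro k hk
    obtain ⟨c, hcsub, hcch⟩ := hcherk k hk
    have : c0 = c := hcon c0 c hc0U (mem_UU.mpr ⟨k, (Finset.mem_erase.mp hk).2, hcsub⟩) hc0ch hcch
    rw [this]; exact hcsub
  -- get a leaf of the sibling
  obtain ⟨l, r, rfl⟩ := isNd_iff.mp (mem_sub_isNd hc0sub)
  have hdc0 : dl (node l r) :=
    dl_of_sub (hval k0 (Finset.mem_erase.mp hk0).2).1 hc0sub
  obtain ⟨a, ha, hai⟩ : ∃ a, a ∈ leaves (node l r) ∧ a ≠ i := by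
    rcases hc0ch with rfl | hre
    · obtain ⟨a, ha⟩ := leaves_nonempty r
      refine ⟨a, by simp [leaves, ha], ?_⟩
      intro e
      exact Finset.disjoint_left.mp hdc0.1 (by simp [leaves]) (e ▸ ha)
    · obtain ⟨a, ha⟩ := leaves_nonempty l
      refine ⟨a, by simp [leaves, ha], ?_⟩
      intro e
      rw [hre] at hdc0
      exact Finset.disjoint_left.mp hdc0.1 (e ▸ ha) (by simp [leaves])
  -- a is in every I.erase k for k ∈ I.erase i : contradiction
  have haI : ∀ k ∈ I.erase i, a ∈ I.erase k := by
    intro k hk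
    have := leaves_sub (hall k hk) ha
    rwa [(hval k (Finset.mem_erase.mp hk).2).2] at this
  obtain ⟨k0', hk0'⟩ := Finset.mem_erase.mp hk0
  have haI' : a ∈ I := (Finset.mem_erase.mp (haI k0 hk0)).2
  have : a ∈ I.erase i := Finset.mem_erase.mpr ⟨hai, haI'⟩
  exact (Finset.mem_erase.mp (haI a this)).1 rfl

lemma card_aux {i : ℕ} (D : Finset BT) (hD : D ⊆ UU I T)
    (h : UU (I.erase i) (fun k => del i (T k)) ⊆ ((UU I T) \ D).image (del i)) :
    (UU (I.erase i) (fun k => del i (T k))).card + D.card ≤ (UU I T).card := by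
  have h1 : (UU (I.erase i) (fun k => del i (T k))).card ≤ ((UU I T) \ D).card :=
    le_trans (Finset.card_le_card h) (Finset.card_image_le)
  rw [Finset.card_sdiff_of_subset hD] at h1
  have := Finset.card_le_card hD
  omega

lemma count3 (hval : Valid I T) (h3 : 3 ≤ I.card) {i : ℕ} (hi : i ∈ I) :
    (UU (I.erase i) (fun k => del i (T k))).card + 3 ≤ (UU I T).card := by
  obtain ⟨c1, c2, hc1, hc2, hch1, hch2, hne⟩ := two_cherries hval h3 hi
  have hTi : T i ∈ UU I T := root_mem hval h3 hi
  have hiTi : i ∉ leaves (T i) := by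
    rw [(hval i hi).2]; simp
  have hTic : ∀ c, cher i c → T i ≠ c := by
    intro c hc e
    exact hiTi (e ▸ cher_mem_leaves hc)
  have hcard : ({T i, c1, c2} : Finset BT).card = 3 := by
    rw [Finset.card_insert_of_notMem (by simp [hTic c1 hch1, hTic c2 hch2]),
      Finset.card_insert_of_notMem (by simp [hne]), Finset.card_singleton]
  have := card_aux {T i, c1, c2}
    (by intro s hs; simp only [Finset.mem_insert, Finset.mem_singleton] at hs
        rcases hs with rfl | rfl | rfl <;> assumption)
    (le_trans (UU_del_subset hval hi) (Finset.image_subset_image (by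
      intro s hs
      obtain ⟨hsU, hsc, hsT⟩ := Finset.mem_filter.mp hs
      refine Finset.mem_sdiff.mpr ⟨hsU, ?_⟩
      simp only [Finset.mem_insert, Finset.mem_singleton]
      push_neg
      exact ⟨hsT, fun e => hsc (e ▸ hch1), fun e => hsc (e ▸ hch2)⟩)))
  omega

/-- counting with one extra collision element -/
lemma count4_col (hval : Valid I T) (h3 : 3 ≤ I.card) {i : ℕ} (hi : i ∈ I)
    {s t0 : BT} (hsU : s ∈ UU I T) (ht0U : t0 ∈ UU I T) (hst : s ≠ t0)
    (hdel : del i s = del i t0) (hsc : ¬ cher i s) (hsT : s ≠ T i)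
    (ht0c : ¬ cher i t0) (ht0T : t0 ≠ T i) :
    (UU (I.erase i) (fun k => del i (T k))).card + 4 ≤ (UU I T).card := by
  obtain ⟨c1, c2, hc1, hc2, hch1, hch2, hne⟩ := two_cherries hval h3 hi
  have hTi : T i ∈ UU I T := root_mem hval h3 hi
  have hiTi : i ∉ leaves (T i) := by rw [(hval i hi).2]; simp
  have hTic : ∀ c, cher i c → T i ≠ c := fun c hc e => hiTi (e ▸ cher_mem_leaves hc)
  have hcard : ({s, T i, c1, c2} : Finset BT).card = 4 := by
    rw [Finset.card_insert_of_notMem (by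
        simp only [Finset.mem_insert, Finset.mem_singleton]
        push_neg
        exact ⟨hsT, fun e => hsc (e ▸ hch1), fun e => hsc (e ▸ hch2)⟩),
      Finset.card_insert_of_notMem (by simp [hTic c1 hch1, hTic c2 hch2]),
      Finset.card_insert_of_notMem (by simp [hne]), Finset.card_singleton]
  have := card_aux {s, T i, c1, c2}
    (by intro u hu; simp only [Finset.mem_insert, Finset.mem_singleton] at hu
        rcases hu with rfl | rfl | rfl | rfl <;> assumption)
    (by
      intro t' ht'
      obtain ⟨u, hu, hut⟩ := Finset.mem_image.mp (UU_del_subset hval hi ht')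
      obtain ⟨huU, huc, huT⟩ := Finset.mem_filter.mp hu
      by_cases hus : u = s
      · subst hus
        refine Finset.mem_image.mpr ⟨t0, Finset.mem_sdiff.mpr ⟨ht0U, ?_⟩, hdel ▸ hut⟩
        simp only [Finset.mem_insert, Finset.mem_singleton]
        push_neg
        exact ⟨Ne.symm hst, ht0T, fun e => ht0c (e ▸ hch1), fun e => ht0c (e ▸ hch2)⟩
      · refine Finset.mem_image.mpr ⟨u, Finset.mem_sdiff.mpr ⟨huU, ?_⟩, hut⟩
        simp only [Finset.mem_insert, Finset.mem_singleton]
        push_neg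
        exact ⟨hus, huT, fun e => huc (e ▸ hch1), fun e => huc (e ▸ hch2)⟩)
  omega

/-- counting with one extra lost element -/
lemma count4_lost (hval : Valid I T) (h3 : 3 ≤ I.card) {i : ℕ} (hi : i ∈ I)
    {t0 : BT} (ht0U : t0 ∈ UU I T) (ht0c : ¬ cher i t0) (ht0T : t0 ≠ T i)
    (ht0fix : del i t0 = t0)
    (ht0lost : t0 ∉ UU (I.erase i) (fun k => del i (T k))) :
    (UU (I.erase i) (fun k => del i (T k))).card + 4 ≤ (UU I T).card := by
  obtain ⟨c1, c2, hc1, hc2, hch1, hch2, hne⟩ := two_cherries hval h3 hi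
  have hTi : T i ∈ UU I T := root_mem hval h3 hi
  have hiTi : i ∉ leaves (T i) := by rw [(hval i hi).2]; simp
  have hTic : ∀ c, cher i c → T i ≠ c := fun c hc e => hiTi (e ▸ cher_mem_leaves hc)
  have hcard : ({t0, T i, c1, c2} : Finset BT).card = 4 := by
    rw [Finset.card_insert_of_notMem (by
        simp only [Finset.mem_insert, Finset.mem_singleton]
        push_neg
        exact ⟨ht0T, fun e => ht0c (e ▸ hch1), fun e => ht0c (e ▸ hch2)⟩),
      Finset.card_insert_of_notMem (by simp [hTic c1 hch1, hTic c2 hch2]),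
      Finset.card_insert_of_notMem (by simp [hne]), Finset.card_singleton]
  have := card_aux {t0, T i, c1, c2}
    (by intro u hu; simp only [Finset.mem_insert, Finset.mem_singleton] at hu
        rcases hu with rfl | rfl | rfl | rfl <;> assumption)
    (by
      intro t' ht'
      obtain ⟨u, hu, hut⟩ := Finset.mem_image.mp (UU_del_subset hval hi ht')
      obtain ⟨huU, huc, huT⟩ := Finset.mem_filter.mp hu
      have hus : u ≠ t0 := by
        intro e
        subst e
        rw [ht0fix] at hut
        exact ht0lost (hut ▸ ht')
      refine Finset.mem_image.mpr ⟨u, Finset.mem_sdiff.mpr ⟨huU, ?_⟩, hut⟩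
      simp only [Finset.mem_insert, Finset.mem_singleton]
      push_neg
      exact ⟨hus, huT, fun e => huc (e ▸ hch1), fun e => huc (e ▸ hch2)⟩)
  omega

end COD

namespace COD
open BT

variable {I : Finset ℕ} {T : ℕ → BT}

lemma sub_of_not_nd {t : BT} (h : ¬ isNd t) : Sub t = ∅ := by
  cases t with
  | leaf i => rfl
  | node l r => exact absurd trivial h

lemma isNd_of_isChild {c s : BT} (h : isChild c s) : isNd s := by
  cases s with
  | leaf i => simp [isChild, children] at h
  | node l r => trivial

lemma child_leaves {c s : BT} (h : isChild c s) : leaves c ⊆ leaves s := by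
  cases s with
  | leaf i => simp [isChild, children] at h
  | node l r =>
      simp only [isChild, children, Finset.mem_insert, Finset.mem_singleton] at h
      rcases h with rfl | rfl
      · exact Finset.subset_union_left
      · exact Finset.subset_union_right

lemma cher_del_child {i : ℕ} {l t0 : BT} (hch : cher i l) (hnd : isNd t0)
    (hdel : del i l = t0) : isChild t0 l := by
  cases l with
  | leaf j => simp [cher] at hch
  | node a b =>
      rcases hch with rfl | hb
      · rw [del_node_left] at hdel
        subst hdel
        simp [isChild, children]
      · by_cases ha : a = leaf i
        · exfalso
          rw [ha, hb, del_node_left] at hdel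
          rw [← hdel] at hnd
          exact hnd
        · rw [hb] at hdel ⊢
          rw [del_node_right ha] at hdel
          subst hdel
          simp [isChild, children]

lemma mem_UU_del (hval : Valid I T) {i : ℕ} {k : ℕ} (hk : k ∈ I.erase i)
    {u : BT} (hu : u ∈ Sub (T k)) (hnd : isNd (del i u)) :
    del i u ∈ UU (I.erase i) (fun k => del i (T k)) := by
  refine mem_UU.mpr ⟨k, hk, ?_⟩
  rw [sub_del (hval k (Finset.mem_erase.mp hk).2).1]
  exact Finset.mem_filter.mpr ⟨Finset.mem_image.mpr ⟨u, hu, rfl⟩, hnd⟩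

/-- The "extra collision" predicate. -/
def EC (I : Finset ℕ) (T : ℕ → BT) (i : ℕ) (t0 : BT) : Prop :=
  ∃ s ∈ UU I T, s ≠ t0 ∧ del i s = del i t0 ∧ ¬ cher i s ∧ s ≠ T i

/-- If there is no extra collision, the unary non-root subtree survives deletion. -/
lemma step_survive (hval : Valid I T) (h3I : 3 ≤ I.card)
    {t0 w : BT} (ht0U : t0 ∈ UU I T) (hnr : ∀ j ∈ I, t0 ≠ T j)
    (hcw : isChild t0 w) (huniq : ∀ s ∈ UU I T, isChild t0 s → s = w)
    {i j0 : ℕ} (hiI : i ∈ I) (hj0 : j0 ∈ I) (hij0 : i ≠ j0)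
    (hwsub : w ∈ Sub (T j0)) (hit0 : i ∉ leaves t0) (hwnc : ¬ cher i w)
    (hEC : ¬ EC I T i t0) :
    t0 ∈ UU (I.erase i) (fun k => del i (T k)) ∧
    (∀ k ∈ I.erase i, t0 ≠ del i (T k)) ∧
    del i w ∈ UU (I.erase i) (fun k => del i (T k)) ∧
    isChild t0 (del i w) ∧
    (∀ s' ∈ UU (I.erase i) (fun k => del i (T k)), isChild t0 s' → s' = del i w) := by
  have ht0nd : isNd t0 := by
    obtain ⟨k, hk, hs⟩ := mem_UU.mp ht0U
    exact mem_sub_isNd hs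
  have hwnd : isNd w := mem_sub_isNd hwsub
  have ht0fix : del i t0 = t0 := del_of_not_mem hit0
  have hj0e : j0 ∈ I.erase i := Finset.mem_erase.mpr ⟨Ne.symm hij0, hj0⟩
  have ht0sub : t0 ∈ Sub (T j0) := child_mem_sub hwsub hcw ht0nd
  -- the children of w
  obtain ⟨l0, r0, hw⟩ := isNd_iff.mp hwnd
  have hl0 : l0 ≠ leaf i := by
    intro e; exact hwnc (by rw [hw, e]; exact Or.inl rfl)
  have hr0 : r0 ≠ leaf i := by
    intro e; exact hwnc (by rw [hw, e]; exact Or.inr rfl)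
  have hdelw : del i w = node (del i l0) (del i r0) := by rw [hw]; exact del_node hl0 hr0
  have hchild : t0 = l0 ∨ t0 = r0 := by
    rw [hw] at hcw
    simpa [isChild, children] using hcw
  have hwncld : isChild t0 (del i w) := by
    rw [hdelw]
    rcases hchild with h | h
    · simp [isChild, children, ← h, ht0fix]
    · simp [isChild, children, ← h, ht0fix]
  have hdelwnd : isNd (del i w) := by rw [hdelw]; trivial
  refine ⟨?_, ?_, ?_, hwncld, ?_⟩
  · -- t0 ∈ U'
    have := mem_UU_del hval hj0e ht0sub (by rw [ht0fix]; exact ht0nd)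
    rwa [ht0fix] at this
  · -- t0 is not a root of the reduced family
    intro k hk he
    obtain ⟨hki, hkI⟩ := Finset.mem_erase.mp hk
    apply hEC
    refine ⟨T k, root_mem hval h3I hkI, ?_, ?_, ?_, ?_⟩
    · intro e
      apply hit0
      rw [← e, (hval k hkI).2]
      exact Finset.mem_erase.mpr ⟨Ne.symm hki, hiI⟩
    · rw [← he, ht0fix]
    · intro hch
      have : isChild t0 (T k) := cher_del_child hch ht0nd he.symm
      have := huniq (T k) (root_mem hval h3I hkI) this
      exact hwnc (this ▸ hch)
    · exact fun e => roots_ne hval hkI hiI hki e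
  · -- del i w ∈ U'
    exact mem_UU_del hval hj0e hwsub hdelwnd
  · -- uniqueness of the parent in the reduced family
    intro s' hs' hcs'
    obtain ⟨k, hk, hmem⟩ := mem_UU.mp hs'
    obtain ⟨hki, hkI⟩ := Finset.mem_erase.mp hk
    rw [sub_del (hval k hkI).1] at hmem
    obtain ⟨him, hnd⟩ := Finset.mem_filter.mp hmem
    obtain ⟨u, hu, rfl⟩ := Finset.mem_image.mp him
    have huU : u ∈ UU I T := mem_UU.mpr ⟨k, hkI, hu⟩
    by_cases hiu : i ∈ leaves u
    · obtain ⟨l, r, rfl⟩ := isNd_iff.mp (mem_sub_isNd hu)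
      have hdu : dl (node l r) := dl_of_sub (hval k hkI).1 hu
      by_cases hli : l = leaf i
      · -- s' = r and r = w
        subst hli
        rw [del_node_left] at hcs' hnd ⊢
        have hrnd : isNd r := isNd_of_isChild hcs'
        have hrU : r ∈ UU I T :=
          mem_UU.mpr ⟨k, hkI, child_mem_sub hu (by simp [isChild, children]) hrnd⟩
        have hrw : r = w := huniq r hrU hcs'
        have hiw : i ∉ leaves w := by
          rw [← hrw]
          exact fun h => Finset.disjoint_left.mp hdu.1 (by simp [leaves]) h
        rw [del_of_not_mem hiw, ← hrw]
      · by_cases hri : r = leaf i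
        · subst hri
          rw [del_node_right hli] at hcs' hnd ⊢
          have hlnd : isNd l := isNd_of_isChild hcs'
          have hlU : l ∈ UU I T :=
            mem_UU.mpr ⟨k, hkI, child_mem_sub hu (by simp [isChild, children]) hlnd⟩
          have hlw : l = w := huniq l hlU hcs'
          have hiw : i ∉ leaves w := by
            rw [← hlw]
            exact fun h => Finset.disjoint_left.mp hdu.1 h (by simp [leaves])
          rw [del_of_not_mem hiw, ← hlw]
        · rw [del_node hli hri] at hcs' hnd ⊢
          have hcases : del i l = t0 ∨ del i r = t0 := by
            simpa [isChild, children, eq_comm] using hcs'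
          have key : ∀ c : BT, c ∈ Sub (T k) → isChild c (node l r) → del i c = t0 → c = t0 := by
            intro c hcsub hcc hcdel
            by_contra hne
            have hcnd : isNd c := by
              cases c with
              | leaf j =>
                  exfalso
                  rw [show del i (leaf j) = leaf j from rfl] at hcdel
                  rw [← hcdel] at ht0nd
                  exact ht0nd
              | node a b => trivial
            apply hEC
            refine ⟨c, mem_UU.mpr ⟨k, hkI, hcsub⟩, hne, by rw [hcdel, ht0fix], ?_, ?_⟩
            · intro hch
              have : isChild t0 c := cher_del_child hch ht0nd hcdel
              have := huniq c (mem_UU.mpr ⟨k, hkI, hcsub⟩) this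
              exact hwnc (this ▸ hch)
            · intro e
              exact root_not_sub hval hiI hkI (Ne.symm hki) (e ▸ hcsub)
          rcases hcases with hc | hc
          · have hlsub : l ∈ Sub (T k) := by
              have hlnd : isNd l := by
                cases l with
                | leaf j =>
                    exfalso
                    rw [show del i (leaf j) = leaf j from rfl] at hc
                    rw [← hc] at ht0nd
                    exact ht0nd
                | node a b => trivial
              exact child_mem_sub hu (by simp [isChild, children]) hlnd
            have hlt : l = t0 := key l hlsub (by simp [isChild, children]) hc
            have hw' : node l r = w := huniq _ huU (by simp [isChild, children, hlt])
            rw [← del_node hli hri, hw']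
          · have hrsub : r ∈ Sub (T k) := by
              have hrnd : isNd r := by
                cases r with
                | leaf j =>
                    exfalso
                    rw [show del i (leaf j) = leaf j from rfl] at hc
                    rw [← hc] at ht0nd
                    exact ht0nd
                | node a b => trivial
              exact child_mem_sub hu (by simp [isChild, children]) hrnd
            have hrt : r = t0 := key r hrsub (by simp [isChild, children]) hc
            have hw' : node l r = w := huniq _ huU (by simp [isChild, children, hrt])
            rw [← del_node hli hri, hw']
    · rw [del_of_not_mem hiu] at hcs' hnd ⊢
      have huw : u = w := huniq u huU hcs'
      subst huw
      rw [del_of_not_mem hiu]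

end COD

namespace COD
open BT

/-- Lower bound: any valid family on `m ≥ 3` indices has at least `3m - 6`
distinct internal subtrees. -/
lemma lb : ∀ (m : ℕ) (I : Finset ℕ) (T : ℕ → BT), I.card = m → 3 ≤ m → Valid I T →
    3 * m ≤ (UU I T).card + 6 := by
  intro m
  induction m using Nat.strong_induction_on with
  | _ m ih =>
    intro I T hm h3 hval
    have h3I : 3 ≤ I.card := by omega
    by_cases h4 : 4 ≤ m
    · obtain ⟨i, hi⟩ : I.Nonempty := Finset.card_pos.mp (by omega)
      have hIe : (I.erase i).card = m - 1 := by rw [Finset.card_erase_of_mem hi, hm]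
      have hih := ih (m - 1) (by omega) (I.erase i) (fun k => del i (T k)) hIe (by omega)
        (valid_del hval h3I hi)
      have hc3 := count3 hval h3I hi
      omega
    · have hsub : I.image T ⊆ UU I T := by
        intro s hs
        obtain ⟨j, hj, rfl⟩ := Finset.mem_image.mp hs
        exact root_mem hval h3I hj
      have hinj : Set.InjOn T I := by
        intro j hj k hk hjk
        by_contra hne
        exact roots_ne hval hj hk hne hjk
      have hcard : (I.image T).card = I.card := Finset.card_image_of_injOn hinj
      have := Finset.card_le_card hsub
      omega

/-- If the family contains a unary non-root subtree, at least `3m - 5` distinct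
internal subtrees are needed. -/
lemma unary_lb : ∀ (m : ℕ) (I : Finset ℕ) (T : ℕ → BT), I.card = m → 3 ≤ m → Valid I T →
    ∀ t0 w : BT, t0 ∈ UU I T → (∀ j ∈ I, t0 ≠ T j) →
    w ∈ UU I T → isChild t0 w → (∀ s ∈ UU I T, isChild t0 s → s = w) →
    3 * m ≤ (UU I T).card + 5 := by
  intro m
  induction m using Nat.strong_induction_on with
  | _ m ih =>
    intro I T hm h3 hval t0 w ht0U hnr hwU hcw huniq
    have h3I : 3 ≤ I.card := by omega
    have ht0nd : isNd t0 := by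
      obtain ⟨k, hk, hs⟩ := mem_UU.mp ht0U
      exact mem_sub_isNd hs
    by_cases h4 : 4 ≤ m
    swap
    · -- base case m = 3 : no non-root internal subtree exists
      exfalso
      obtain ⟨j, hj, hsub⟩ := mem_UU.mp ht0U
      have hdj : dl (T j) := (hval j hj).1
      obtain ⟨l, r, hTj⟩ := isNd_iff.mp (root_isNd hval h3I hj)
      have hlv : (leaves (T j)).card = 2 := by
        rw [(hval j hj).2, Finset.card_erase_of_mem hj]; omega
      have hcl : (leaves l).card = 1 ∧ (leaves r).card = 1 := by
        have hdis : Disjoint (leaves l) (leaves r) := by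
          have := hdj; rw [hTj] at this; exact this.1
        have h1 : 1 ≤ (leaves l).card := Finset.card_pos.mpr (leaves_nonempty l)
        have h2 : 1 ≤ (leaves r).card := Finset.card_pos.mpr (leaves_nonempty r)
        have hu : (leaves l).card + (leaves r).card = 2 := by
          rw [← Finset.card_union_of_disjoint hdis]
          rw [hTj] at hlv
          exact hlv
        omega
      have hlnd : ¬ isNd l := fun h => by
        have hdl : dl l := by have := hdj; rw [hTj] at this; exact this.2.1
        have := two_le_card_leaves hdl h
        omega
      have hrnd : ¬ isNd r := fun h => by
        have hdr : dl r := by have := hdj; rw [hTj] at this; exact this.2.2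
        have := two_le_card_leaves hdr h
        omega
      rw [hTj] at hsub
      rcases mem_sub_node.mp hsub with he | hmem | hmem
      · exact hnr j hj (he.trans hTj.symm)
      · rw [sub_of_not_nd hlnd] at hmem; exact absurd hmem (Finset.notMem_empty _)
      · rw [sub_of_not_nd hrnd] at hmem; exact absurd hmem (Finset.notMem_empty _)
    -- main step, m ≥ 4
    obtain ⟨j0, hj0I, hwsub⟩ := mem_UU.mp hwU
    have hwnd : isNd w := mem_sub_isNd hwsub
    have hdw : dl w := dl_of_sub (hval j0 hj0I).1 hwsub
    -- a convenient elimination: given a suitable deletion index with no extra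
    -- collision, apply the induction hypothesis
    have hSTEP : ∀ i : ℕ, i ∈ I → i ≠ j0 → i ∉ leaves t0 → ¬ cher i w →
        3 * m ≤ (UU I T).card + 5 := by
      intro i hiI hij0 hit0 hwnc
      have hIe : (I.erase i).card = m - 1 := by rw [Finset.card_erase_of_mem hiI, hm]
      have hval' := valid_del hval h3I hiI
      by_cases hec : EC I T i t0
      · -- extra collision: drop is at least 4
        obtain ⟨s, hsU, hst, hdel, hsc, hsT⟩ := hec
        have hcount := count4_col hval h3I hiI hsU ht0U hst hdel hsc hsT
          (fun hch => hit0 (cher_mem_leaves hch)) (hnr i hiI)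
        have hlb := lb (m - 1) (I.erase i) (fun k => del i (T k)) hIe (by omega) hval'
        omega
      · obtain ⟨h1, h2, h3', h4', h5⟩ := step_survive hval h3I ht0U hnr hcw huniq
          hiI hj0I hij0 hwsub hit0 hwnc hec
        have hih := ih (m - 1) (by omega) (I.erase i) (fun k => del i (T k)) hIe (by omega)
          hval' t0 (del i w) h1 h2 h3' h4' h5
        have hc3 := count3 hval h3I hiI
        omega
    by_cases hroot : ∃ j ∈ I, w = T j
    · obtain ⟨jr, hjrI, hwT⟩ := hroot
      have hjr0 : jr = j0 := by
        by_contra hne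
        exact root_not_sub hval hjrI hj0I hne (hwT ▸ hwsub)
      subst hjr0
      -- w = T jr; get the sibling of t0
      obtain ⟨l0, r0, hw⟩ := isNd_iff.mp hwnd
      have hchild : t0 = l0 ∨ t0 = r0 := by
        have := hcw; rw [hw] at this
        simpa [isChild, children] using this
      obtain ⟨A, hA⟩ : ∃ A, (w = node t0 A ∨ w = node A t0) := by
        rcases hchild with h | h
        · exact ⟨r0, Or.inl (by rw [hw, ← h])⟩
        · exact ⟨l0, Or.inr (by rw [hw, ← h])⟩
      have hlvA : leaves A ⊆ leaves w := by
        rcases hA with h | h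
        · rw [h]; exact Finset.subset_union_right
        · rw [h]; exact Finset.subset_union_left
      have hdisA : Disjoint (leaves t0) (leaves A) := by
        rcases hA with h | h
        · have := hdw; rw [h] at this; exact this.1
        · have := hdw; rw [h] at this; exact (this.1).symm
      by_cases hAnd : isNd A
      · -- sibling is internal: pick i among its leaves
        obtain ⟨i, hiA⟩ := leaves_nonempty A
        have hiw : i ∈ leaves w := hlvA hiA
        have hiI : i ∈ I := by
          have h := hiw
          rw [hwT, (hval jr hjrI).2] at h
          exact (Finset.mem_erase.mp h).2
        have hijr : i ≠ jr := by
          have h := hiw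
          rw [hwT, (hval jr hjrI).2] at h
          exact (Finset.mem_erase.mp h).1
        have hit0 : i ∉ leaves t0 := fun h => Finset.disjoint_left.mp hdisA h hiA
        have hwnc : ¬ cher i w := by
          intro hch
          rcases hA with h | h <;> rw [h] at hch <;> rcases hch with he | he
          · rw [he] at ht0nd; exact ht0nd
          · rw [he] at hAnd; exact hAnd
          · rw [he] at hAnd; exact hAnd
          · rw [he] at ht0nd; exact ht0nd
        exact hSTEP i hiI hijr hit0 hwnc
      · -- sibling is a single leaf: delete index jr itself
        obtain ⟨a, hAa⟩ : ∃ a, A = leaf a := by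
          cases A with
          | leaf a => exact ⟨a, rfl⟩
          | node _ _ => exact absurd trivial hAnd
        have hjrt0 : jr ∉ leaves t0 := by
          intro h
          have : jr ∈ leaves w := child_leaves hcw h
          rw [hwT, (hval jr hjrI).2] at this
          exact (Finset.mem_erase.mp this).1 rfl
        have ht0fix : del jr t0 = t0 := del_of_not_mem hjrt0
        have ht0nc : ¬ cher jr t0 := fun hch => hjrt0 (cher_mem_leaves hch)
        have hajr : a ≠ jr := by
          have : a ∈ leaves w := hlvA (by rw [hAa]; simp [leaves])
          rw [hwT, (hval jr hjrI).2] at this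
          exact (Finset.mem_erase.mp this).1
        have hwncher : ¬ cher jr w := by
          intro hch
          rcases hA with h | h <;> rw [h, hAa] at hch <;> rcases hch with he | he
          · rw [he] at ht0nd; exact ht0nd
          · exact hajr (by injection he)
          · exact hajr (by injection he)
          · rw [he] at ht0nd; exact ht0nd
        have hIe : (I.erase jr).card = m - 1 := by rw [Finset.card_erase_of_mem hjrI, hm]
        have hval' := valid_del hval h3I hjrI
        have hlb := lb (m - 1) (I.erase jr) (fun k => del jr (T k)) hIe (by omega) hval'
        by_cases hlost : t0 ∈ UU (I.erase jr) (fun k => del jr (T k))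
        · -- t0 survives: this forces an extra collision
          obtain ⟨k, hk, hmem⟩ := mem_UU.mp hlost
          obtain ⟨hkjr, hkI⟩ := Finset.mem_erase.mp hk
          rw [sub_del (hval k hkI).1] at hmem
          obtain ⟨him, _⟩ := Finset.mem_filter.mp hmem
          obtain ⟨u, hu, hud⟩ := Finset.mem_image.mp him
          have hut0 : u ≠ t0 := by
            intro e
            subst e
            -- u = t0 ∈ Sub (T k) : its parent there must be w = T jr, impossible
            have hne : u ≠ T k := hnr k hkI
            obtain ⟨p, hpsub, hpc⟩ := parent_exists hu hne
            have : p = w := huniq p (mem_UU.mpr ⟨k, hkI, hpsub⟩) hpc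
            rw [this, hwT] at hpsub
            exact root_not_sub hval hjrI hkI (Ne.symm hkjr) hpsub
          have hcount := count4_col hval h3I hjrI (mem_UU.mpr ⟨k, hkI, hu⟩) ht0U hut0
            (by rw [hud, ht0fix])
            (by
              intro hch
              have : isChild t0 u := cher_del_child hch ht0nd hud
              have := huniq u (mem_UU.mpr ⟨k, hkI, hu⟩) this
              exact hwncher (this ▸ hch))
            (fun e => root_not_sub hval hjrI hkI (Ne.symm hkjr) (e ▸ hu))
            ht0nc (hnr jr hjrI)
          omega
        · have hcount := count4_lost hval h3I hjrI ht0U ht0nc (hnr jr hjrI) ht0fix hlost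
          omega
    · -- w is not a root: pick i outside `leaves w ∪ {j0}`
      push_neg at hroot
      have hwne : w ≠ T j0 := hroot j0 hj0I
      have hwlt : (leaves w).card ≤ m - 2 := by
        have hsubL : leaves w ⊆ leaves (T j0) := leaves_sub hwsub
        have hne : leaves w ≠ leaves (T j0) := by
          intro he
          exact hwne (sub_proper_leaves (hval j0 hj0I).1 hwsub he)
        have : leaves w ⊂ leaves (T j0) := ssubset_of_subset_of_ne hsubL hne
        have := Finset.card_lt_card this
        rw [(hval j0 hj0I).2, Finset.card_erase_of_mem hj0I, hm] at this
        omega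
      obtain ⟨i, hi⟩ : (I \ insert j0 (leaves w)).Nonempty := by
        apply Finset.card_pos.mp
        have h1 : (insert j0 (leaves w)).card ≤ m - 1 := by
          have := Finset.card_insert_le j0 (leaves w)
          omega
        have h2 := Finset.le_card_sdiff (insert j0 (leaves w)) I
        omega
      obtain ⟨hiI, hiX⟩ := Finset.mem_sdiff.mp hi
      have hij0 : i ≠ j0 := fun e => hiX (by rw [e]; exact Finset.mem_insert_self _ _)
      have hiw : i ∉ leaves w := fun h => hiX (Finset.mem_insert_of_mem h)
      have hit0 : i ∉ leaves t0 := fun h => hiw (child_leaves hcw h)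
      have hwnc : ¬ cher i w := fun hch => hiw (cher_mem_leaves hch)
      exact hSTEP i hiI hij0 hit0 hwnc

end COD

namespace COD

open Relation BT

variable {n : ℕ} (S : YStruct n)

instance : Finite S.V := S.finite

lemma wfe : WellFounded S.edge := by
  have h1 : WellFounded (Relation.TransGen S.edge) := by
    haveI : IsTrans S.V (Relation.TransGen S.edge) := ⟨fun _ _ _ => Relation.TransGen.trans⟩
    haveI : IsIrrefl S.V (Relation.TransGen S.edge) := ⟨S.acyclic⟩
    exact Finite.wellFounded_of_trans_of_irrefl _
  exact Subrelation.wf (fun {a b} h => Relation.TransGen.single h) h1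

lemma wff : WellFounded (fun a b => S.edge b a) := by
  have h1 : WellFounded (Relation.TransGen fun a b => S.edge b a) := by
    haveI : IsTrans S.V (Relation.TransGen fun a b => S.edge b a) :=
      ⟨fun _ _ _ => Relation.TransGen.trans⟩
    haveI : IsIrrefl S.V (Relation.TransGen fun a b => S.edge b a) := by
      constructor
      intro a h
      exact S.acyclic a (Relation.transGen_swap.mp h)
    exact Finite.wellFounded_of_trans_of_irrefl _
  exact Subrelation.wf (r := Relation.TransGen fun a b => S.edge b a)
    (fun {a b} h => Relation.TransGen.single h) h1

lemma exists_pair (v : S.V) (hv : v ∉ Set.range S.x) :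
    ∃ p q : S.V, p ≠ q ∧ S.edge p v ∧ S.edge q v ∧ ∀ u, S.edge u v → u = p ∨ u = q := by
  have h2 := S.indeg v hv
  obtain ⟨p, q, hpq, hset⟩ := Set.ncard_eq_two.mp h2
  refine ⟨p, q, hpq, ?_, ?_, ?_⟩
  · show p ∈ {u | S.edge u v}
    rw [hset]; exact Set.mem_insert _ _
  · show q ∈ {u | S.edge u v}
    rw [hset]; exact Set.mem_insert_iff.mpr (Or.inr rfl)
  · intro u hu
    have : u ∈ ({p, q} : Set S.V) := by rw [← hset]; exact hu
    simpa using this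

lemma xy_ne (hn : 3 ≤ n) (i j : Fin n) : S.x i ≠ S.y j := by
  intro he
  have hsrc : ∀ u, ¬ S.edge u (S.y j) := by
    rw [← he]
    exact (S.source_iff _).mpr ⟨i, rfl⟩
  have hij : i ≠ j := by
    intro e
    subst e
    exact (S.leaf_set i i).mp (he ▸ Relation.ReflTransGen.refl) rfl
  obtain ⟨k, hki, hkj⟩ : ∃ k : Fin n, k ≠ i ∧ k ≠ j := by
    by_contra hcon
    push_neg at hcon
    have hsub : (Finset.univ : Finset (Fin n)) ⊆ {i, j} := by
      intro k _
      rcases eq_or_ne k i with rfl | hk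
      · simp
      · simp [hcon k hk]
    have := Finset.card_le_card hsub
    have hcard : ({i, j} : Finset (Fin n)).card ≤ 2 := Finset.card_insert_le _ _ |>.trans (by simp)
    simp [Finset.card_univ] at this
    omega
  have hpath : Relation.ReflTransGen S.edge (S.x k) (S.y j) := (S.leaf_set k j).mpr hkj
  rcases Relation.ReflTransGen.cases_tail hpath with heq | ⟨c, _, hc⟩
  · rw [heq] at he
    exact hki (S.x.injective he.symm)
  · exact hsrc c hc

/-- the two parents cannot have a common ancestor -/
lemma no_common_anc {v p q : S.V} (hp : S.edge p v) (hq : S.edge q v) (hpq : p ≠ q) :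
    ∀ u : S.V, Relation.ReflTransGen S.edge u p → Relation.ReflTransGen S.edge u q → False := by
  intro u
  refine (wff S).induction
    (C := fun u => Relation.ReflTransGen S.edge u p → Relation.ReflTransGen S.edge u q → False)
    u ?_
  intro u ihu hup huq
  have huv : Relation.TransGen S.edge u v := Relation.TransGen.tail' hup hp
  obtain ⟨w0, hw0⟩ := Set.ncard_eq_one.mp (S.tree_like v u huv)
  have hmem : ∀ w, S.edge u w → Relation.ReflTransGen S.edge w v → w = w0 := by
    intro w h1 h2
    have : w ∈ {w | S.edge u w ∧ Relation.ReflTransGen S.edge w v} := ⟨h1, h2⟩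
    rw [hw0] at this
    exact this
  rcases Relation.ReflTransGen.cases_head hup with rfl | ⟨w1, hw1, h1p⟩
  · rcases Relation.ReflTransGen.cases_head huq with rfl | ⟨w2, hw2, h2q⟩
    · exact hpq rfl
    · have hv : v = w0 := hmem v hp Relation.ReflTransGen.refl
      have hw2' : w2 = w0 := hmem w2 hw2 (h2q.trans (Relation.ReflTransGen.single hq))
      have : Relation.ReflTransGen S.edge v q := by rw [hv, ← hw2']; exact h2q
      exact S.acyclic v (Relation.TransGen.tail' this hq)
  · rcases Relation.ReflTransGen.cases_head huq with rfl | ⟨w2, hw2, h2q⟩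
    · have hv : v = w0 := hmem v hq Relation.ReflTransGen.refl
      have hw1' : w1 = w0 := hmem w1 hw1 (h1p.trans (Relation.ReflTransGen.single hp))
      have : Relation.ReflTransGen S.edge v p := by rw [hv, ← hw1']; exact h1p
      exact S.acyclic v (Relation.TransGen.tail' this hp)
    · have hw1' : w1 = w0 := hmem w1 hw1 (h1p.trans (Relation.ReflTransGen.single hp))
      have hw2' : w2 = w0 := hmem w2 hw2 (h2q.trans (Relation.ReflTransGen.single hq))
      exact ihu w1 hw1 h1p (by rw [hw1', ← hw2']; exact h2q)

noncomputable def trF (v : S.V) (ih : ∀ u, S.edge u v → BT) : BT :=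
  if h : ∀ u, ¬ S.edge u v then
    BT.leaf (((S.source_iff v).mp h).choose : ℕ)
  else
    have hv : v ∉ Set.range S.x := fun hx => h ((S.source_iff v).mpr hx)
    BT.node (ih (exists_pair S v hv).choose (exists_pair S v hv).choose_spec.choose_spec.2.1)
      (ih (exists_pair S v hv).choose_spec.choose
        (exists_pair S v hv).choose_spec.choose_spec.2.2.1)

noncomputable def tr : S.V → BT := (wfe S).fix (trF S)

lemma tr_def (v : S.V) : tr S v = trF S v (fun u _ => tr S u) :=
  (wfe S).fix_eq (trF S) v

lemma tr_x (i : Fin n) : tr S (S.x i) = BT.leaf i := by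
  have h : ∀ u, ¬ S.edge u (S.x i) := (S.source_iff _).mpr ⟨i, rfl⟩
  rw [tr_def, trF, dif_pos h]
  have hc := ((S.source_iff (S.x i)).mp h).choose_spec
  have : ((S.source_iff (S.x i)).mp h).choose = i := S.x.injective hc
  rw [this]

lemma tr_node (v : S.V) (hv : v ∉ Set.range S.x) :
    ∃ p q : S.V, p ≠ q ∧ S.edge p v ∧ S.edge q v ∧ (∀ u, S.edge u v → u = p ∨ u = q) ∧
      tr S v = BT.node (tr S p) (tr S q) := by
  have h : ¬ ∀ u, ¬ S.edge u v := fun h => hv ((S.source_iff v).mp h)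
  obtain ⟨hne, h1, h2, h3⟩ := (exists_pair S v
    (fun hx => h ((S.source_iff v).mpr hx))).choose_spec.choose_spec
  exact ⟨_, _, hne, h1, h2, h3, by rw [tr_def, trF, dif_neg h]⟩

lemma tr_isNd (v : S.V) (hv : v ∉ Set.range S.x) : isNd (tr S v) := by
  obtain ⟨p, q, _, _, _, _, he⟩ := tr_node S v hv
  rw [he]
  trivial

lemma source_of_isLeaf (v : S.V) (h : ¬ isNd (tr S v)) : v ∈ Set.range S.x := by
  by_contra hv
  exact h (tr_isNd S v hv)

/-- characterization of the leaves of `tr` -/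
lemma mem_leaves_tr : ∀ v : S.V, ∀ j' : ℕ,
    (j' ∈ leaves (tr S v) ↔ ∃ i : Fin n, (i : ℕ) = j' ∧ Relation.ReflTransGen S.edge (S.x i) v) := by
  intro v
  refine (wfe S).induction
    (C := fun v => ∀ j' : ℕ, (j' ∈ leaves (tr S v) ↔
      ∃ i : Fin n, (i : ℕ) = j' ∧ Relation.ReflTransGen S.edge (S.x i) v)) v ?_
  intro v ihv j'
  by_cases hv : v ∈ Set.range S.x
  · obtain ⟨i0, rfl⟩ := hv
    rw [tr_x]
    constructor
    · intro h
      have : j' = (i0 : ℕ) := by simpa [leaves] using h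
      exact ⟨i0, this.symm, Relation.ReflTransGen.refl⟩
    · rintro ⟨i, rfl, hpath⟩
      rcases Relation.ReflTransGen.cases_tail hpath with heq | ⟨c, _, hc⟩
      · rw [S.x.injective heq]
        simp [leaves]
      · exact absurd hc (((S.source_iff _).mpr ⟨i0, rfl⟩) c)
  · obtain ⟨p, q, hpq, hp, hq, henum, he⟩ := tr_node S v hv
    rw [he]
    show j' ∈ leaves (tr S p) ∪ leaves (tr S q) ↔ _
    rw [Finset.mem_union, ihv p hp j', ihv q hq j']
    constructor
    · rintro (⟨i, rfl, hpath⟩ | ⟨i, rfl, hpath⟩)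
      · exact ⟨i, rfl, hpath.tail hp⟩
      · exact ⟨i, rfl, hpath.tail hq⟩
    · rintro ⟨i, rfl, hpath⟩
      rcases Relation.ReflTransGen.cases_tail hpath with heq | ⟨c, hic, hc⟩
      · exact absurd ⟨i, heq.symm⟩ hv
      · rcases henum c hc with rfl | rfl
        · exact Or.inl ⟨i, rfl, hic⟩
        · exact Or.inr ⟨i, rfl, hic⟩

lemma dl_tr : ∀ v : S.V, dl (tr S v) := by
  intro v
  refine (wfe S).induction (C := fun v => dl (tr S v)) v ?_
  intro v ihv
  by_cases hv : v ∈ Set.range S.x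
  · obtain ⟨i0, rfl⟩ := hv
    rw [tr_x]
    trivial
  · obtain ⟨p, q, hpq, hp, hq, henum, he⟩ := tr_node S v hv
    rw [he]
    refine ⟨?_, ihv p hp, ihv q hq⟩
    rw [Finset.disjoint_left]
    intro j' hjp hjq
    obtain ⟨i1, rfl, hpath1⟩ := (mem_leaves_tr S p j').mp hjp
    obtain ⟨i2, hi2, hpath2⟩ := (mem_leaves_tr S q _).mp hjq
    have : i2 = i1 := by
      have := Fin.val_injective hi2
      exact this
    subst this
    exact no_common_anc S hp hq hpq (S.x i2) hpath1 hpath2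

lemma tr_inj : ∀ a b : S.V, tr S a = tr S b → a = b := by
  intro a
  refine (wfe S).induction (C := fun a => ∀ b : S.V, tr S a = tr S b → a = b) a ?_
  intro a iha b he
  by_cases ha : a ∈ Set.range S.x
  · obtain ⟨ia, rfl⟩ := ha
    by_cases hb : b ∈ Set.range S.x
    · obtain ⟨ib, rfl⟩ := hb
      rw [tr_x, tr_x] at he
      have : (ia : ℕ) = ib := by injection he
      rw [Fin.val_injective this]
    · rw [tr_x] at he
      have := tr_isNd S b hb
      rw [← he] at this
      exact absurd this (by intro h; exact h)
  · by_cases hb : b ∈ Set.range S.x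
    · obtain ⟨ib, rfl⟩ := hb
      rw [tr_x] at he
      have := tr_isNd S a ha
      rw [he] at this
      exact absurd this (by intro h; exact h)
    · obtain ⟨p, q, hpq, hp, hq, henum, hea⟩ := tr_node S a ha
      obtain ⟨p', q', hpq', hp', hq', henum', heb⟩ := tr_node S b hb
      rw [hea, heb] at he
      have h1 : tr S p = tr S p' := by injection he
      have h2 : tr S q = tr S q' := by injection he
      have hpp : p = p' := iha p hp p' h1
      have hqq : q = q' := iha q hq q' h2
      apply S.distinct a b ha hb
      ext u
      simp only [Set.mem_setOf_eq]
      constructor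
      · intro hu
        rcases henum u hu with rfl | rfl
        · rw [hpp]; exact hp'
        · rw [hqq]; exact hq'
      · intro hu
        rcases henum' u hu with rfl | rfl
        · rw [← hpp]; exact hp
        · rw [← hqq]; exact hq

lemma tr_mem_sub {u v : S.V} (hu : u ∉ Set.range S.x)
    (h : Relation.ReflTransGen S.edge u v) : tr S u ∈ Sub (tr S v) := by
  induction h with
  | refl => exact self_mem_sub (tr_isNd S u hu)
  | tail hp he ih =>
      rename_i b c
      have hc : c ∉ Set.range S.x := by
        intro hx
        exact ((S.source_iff c).mpr hx) b he
      obtain ⟨p, q, hpq, hp', hq', henum, hec⟩ := tr_node S c hc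
      rw [hec]
      rcases henum b he with rfl | rfl
      · exact sub_left ih
      · exact sub_right ih

lemma mem_sub_tr : ∀ v : S.V, ∀ s : BT, s ∈ Sub (tr S v) →
    ∃ u : S.V, u ∉ Set.range S.x ∧ Relation.ReflTransGen S.edge u v ∧ tr S u = s := by
  intro v
  refine (wfe S).induction (C := fun v => ∀ s : BT, s ∈ Sub (tr S v) →
    ∃ u : S.V, u ∉ Set.range S.x ∧ Relation.ReflTransGen S.edge u v ∧ tr S u = s) v ?_
  intro v ihv s hs
  by_cases hv : v ∈ Set.range S.x
  · obtain ⟨i0, rfl⟩ := hv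
    rw [tr_x] at hs
    simp [BT.Sub] at hs
  · obtain ⟨p, q, hpq, hp, hq, henum, he⟩ := tr_node S v hv
    rw [he] at hs
    rcases mem_sub_node.mp hs with rfl | hs | hs
    · exact ⟨v, hv, Relation.ReflTransGen.refl, he⟩
    · obtain ⟨u, hu1, hu2, hu3⟩ := ihv p hp s hs
      exact ⟨u, hu1, hu2.tail hp, hu3⟩
    · obtain ⟨u, hu1, hu2, hu3⟩ := ihv q hq s hs
      exact ⟨u, hu1, hu2.tail hq, hu3⟩

lemma reach_sink : ∀ v : S.V, ∃ j : Fin n, Relation.ReflTransGen S.edge v (S.y j) := by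
  intro v
  refine (wff S).induction
    (C := fun v => ∃ j : Fin n, Relation.ReflTransGen S.edge v (S.y j)) v ?_
  intro v ihv
  by_cases hv : ∀ u, ¬ S.edge v u
  · obtain ⟨j, rfl⟩ := (S.sink_iff v).mp hv
    exact ⟨j, Relation.ReflTransGen.refl⟩
  · push_neg at hv
    obtain ⟨w, hw⟩ := hv
    obtain ⟨j, hj⟩ := ihv w hw
    exact ⟨j, Relation.ReflTransGen.head hw hj⟩

end COD

namespace COD

open BT

variable {n : ℕ} (S : YStruct n)

noncomputable instance : Fintype S.V := Fintype.ofFinite _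

noncomputable def od (v : S.V) : ℕ := (Finset.univ.filter (fun u => S.edge v u)).card
noncomputable def idg (v : S.V) : ℕ := (Finset.univ.filter (fun u => S.edge u v)).card

lemma ncard_eq_filter (p : S.V → Prop) :
    {v | p v}.ncard = (Finset.univ.filter p).card := by
  rw [← Set.ncard_coe_finset]
  congr 1
  ext v
  simp

lemma sum_od_eq_sum_idg : ∑ v, od S v = ∑ v, idg S v := by
  unfold od idg
  simp_rw [Finset.card_filter]
  exact Finset.sum_comm

lemma idg_comp {v : S.V} (hv : v ∉ Set.range S.x) : idg S v = 2 := by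
  rw [idg, ← ncard_eq_filter]
  exact S.indeg v hv

lemma idg_input {v : S.V} (hv : v ∈ Set.range S.x) : idg S v = 0 := by
  rw [idg, Finset.card_eq_zero, Finset.filter_eq_empty_iff]
  intro u _
  exact ((S.source_iff v).mpr hv) u

lemma od_sink {v : S.V} (hv : v ∈ Set.range S.y) : od S v = 0 := by
  rw [od, Finset.card_eq_zero, Finset.filter_eq_empty_iff]
  intro u _
  exact ((S.sink_iff v).mpr hv) u

lemma exists_input_anc : ∀ v : S.V, ∃ i : Fin n, Relation.ReflTransGen S.edge (S.x i) v := by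
  intro v
  refine (wfe S).induction
    (C := fun v => ∃ i : Fin n, Relation.ReflTransGen S.edge (S.x i) v) v ?_
  intro v ihv
  by_cases hv : v ∈ Set.range S.x
  · obtain ⟨i, rfl⟩ := hv
    exact ⟨i, Relation.ReflTransGen.refl⟩
  · have : ¬ ∀ u, ¬ S.edge u v := fun h => hv ((S.source_iff v).mp h)
    push_neg at this
    obtain ⟨u, hu⟩ := this
    obtain ⟨i, hi⟩ := ihv u hu
    exact ⟨i, hi.tail hu⟩

lemma card_filter_range_x :
    (Finset.univ.filter (fun v => v ∈ Set.range S.x)).card = n := by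
  have he : Finset.univ.filter (fun v => v ∈ Set.range S.x) = Finset.univ.image S.x := by
    ext v
    simp [Set.mem_range, eq_comm]
  rw [he, Finset.card_image_of_injective _ S.x.injective, Finset.card_univ, Fintype.card_fin]

lemma card_filter_range_y :
    (Finset.univ.filter (fun v => v ∈ Set.range S.y)).card = n := by
  have he : Finset.univ.filter (fun v => v ∈ Set.range S.y) = Finset.univ.image S.y := by
    ext v
    simp [Set.mem_range, eq_comm]
  rw [he, Finset.card_image_of_injective _ S.y.injective, Finset.card_univ, Fintype.card_fin]

end COD

open COD COD.BT in
theorem co_outdegree_two' (n : ℕ) (hn : 3 ≤ n) (S : YStruct n)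
    (hco : S.complexity = 3 * n - 6) (v : S.V) (hv : v ∉ Set.range S.y) :
    {u | S.edge v u}.ncard = 2 := by
  classical
  -- the family of trees
  set I : Finset ℕ := Finset.range n with hI
  set T : ℕ → BT := fun k => if h : k < n then tr S (S.y ⟨k, h⟩) else BT.leaf 0 with hT
  have hTj : ∀ j : Fin n, T (j : ℕ) = tr S (S.y j) := by
    intro j
    simp only [hT, dif_pos j.isLt]
  have hval : Valid I T := by
    intro j hj
    have hjn : j < n := Finset.mem_range.mp hj
    have hTjn : T j = tr S (S.y ⟨j, hjn⟩) := by simp only [hT, dif_pos hjn]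
    constructor
    · rw [hTjn]; exact dl_tr S _
    · rw [hTjn]
      ext j'
      rw [mem_leaves_tr S _ j']
      constructor
      · rintro ⟨i, rfl, hpath⟩
        have hij : i ≠ ⟨j, hjn⟩ := (S.leaf_set i ⟨j, hjn⟩).mp hpath
        refine Finset.mem_erase.mpr ⟨?_, Finset.mem_range.mpr i.isLt⟩
        intro he
        exact hij (Fin.ext he)
      · intro hj'
        obtain ⟨hne, hj'I⟩ := Finset.mem_erase.mp hj'
        have hj'n : j' < n := Finset.mem_range.mp hj'I
        refine ⟨⟨j', hj'n⟩, rfl, (S.leaf_set _ _).mpr ?_⟩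
        intro he
        exact hne (by injection he)
  have hIcard : I.card = n := Finset.card_range n
  -- identification of UU with the image of the computation nodes
  set comp' : Finset S.V := Finset.univ.filter (fun v => v ∉ Set.range S.x) with hcomp
  have hUeq : UU I T = comp'.image (tr S) := by
    ext s
    rw [mem_UU]
    constructor
    · rintro ⟨k, hk, hmem⟩
      have hkn : k < n := Finset.mem_range.mp hk
      rw [show T k = tr S (S.y ⟨k, hkn⟩) from by simp only [hT, dif_pos hkn]] at hmem
      obtain ⟨u, hu1, _, hu3⟩ := mem_sub_tr S _ s hmem
      exact Finset.mem_image.mpr ⟨u, Finset.mem_filter.mpr ⟨Finset.mem_univ _, hu1⟩, hu3⟩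
    · intro hs
      obtain ⟨u, hu, rfl⟩ := Finset.mem_image.mp hs
      have hu' : u ∉ Set.range S.x := (Finset.mem_filter.mp hu).2
      obtain ⟨j, hj⟩ := reach_sink S u
      refine ⟨(j : ℕ), Finset.mem_range.mpr j.isLt, ?_⟩
      rw [hTj j]
      exact tr_mem_sub S hu' hj
  have hUcard : (UU I T).card = S.complexity := by
    rw [hUeq, Finset.card_image_of_injOn (fun a _ b _ h => tr_inj S a b h)]
    rw [YStruct.complexity,
      show {v : S.V | v ∉ Set.range S.x} = (↑comp' : Set S.V) from by ext u; simp [hcomp],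
      Set.ncard_coe_finset]
  have hC6 : S.complexity + 6 = 3 * n := by omega
  -- every non-sink node has out-degree at least 2
  set NS : Finset S.V := Finset.univ.filter (fun v => v ∉ Set.range S.y) with hNS
  have hod2 : ∀ w ∈ NS, 2 ≤ od S w := by
    intro w hwNS
    have hwny : w ∉ Set.range S.y := (Finset.mem_filter.mp hwNS).2
    by_contra hlt
    push_neg at hlt
    -- w has a unique out-neighbour
    have hex : ∃ u, S.edge w u := by
      have : ¬ ∀ u, ¬ S.edge w u := fun h => hwny ((S.sink_iff w).mp h)
      push_neg at this
      exact this
    obtain ⟨w0, hw0⟩ := hex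
    have huniq : ∀ u, S.edge w u → u = w0 := by
      intro u hu
      have h1 : u ∈ Finset.univ.filter (fun u => S.edge w u) := by
        simp [hu]
      have h2 : w0 ∈ Finset.univ.filter (fun u => S.edge w u) := by
        simp [hw0]
      have hcard : (Finset.univ.filter (fun u => S.edge w u)).card ≤ 1 := by
        have := hlt
        rw [od] at this
        omega
      exact Finset.card_le_one.mp hcard u h1 w0 h2
    have hw0c : w0 ∉ Set.range S.x := by
      intro hx
      exact ((S.source_iff w0).mpr hx) w hw0
    by_cases hwx : w ∈ Set.range S.x
    · -- an input with a unique out-neighbour: impossible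
      obtain ⟨i, rfl⟩ := hwx
      have hall : ∀ j : Fin n, j ≠ i → Relation.ReflTransGen S.edge w0 (S.y j) := by
        intro j hji
        have hpath : Relation.ReflTransGen S.edge (S.x i) (S.y j) :=
          (S.leaf_set i j).mpr (Ne.symm hji)
        rcases Relation.ReflTransGen.cases_head hpath with heq | ⟨c, hc, hcy⟩
        · exact absurd heq (xy_ne S hn i j)
        · rw [← huniq c hc]; exact hcy
      obtain ⟨p, q, hpq, hp, hq, _⟩ := exists_pair S w0 hw0c
      obtain ⟨i1, hi1⟩ := exists_input_anc S p
      obtain ⟨i2, hi2⟩ := exists_input_anc S q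
      have hkey : ∀ (u : S.V) (i' : Fin n), Relation.ReflTransGen S.edge (S.x i') u →
          S.edge u w0 → i' = i := by
        intro u i' hanc hedge
        by_contra hne
        have hpath : Relation.ReflTransGen S.edge (S.x i') (S.y i') := by
          have h1 : Relation.ReflTransGen S.edge (S.x i') w0 := hanc.tail hedge
          exact h1.trans (hall i' hne)
        exact (S.leaf_set i' i').mp hpath rfl
      have hi1' : i1 = i := hkey p i1 hi1 hp
      have hi2' : i2 = i := hkey q i2 hi2 hq
      rw [hi1'] at hi1
      rw [hi2'] at hi2
      exact no_common_anc S hp hq hpq (S.x i) hi1 hi2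
    · -- a computation node with a unique out-neighbour: contradicts optimality
      have hwc : w ∉ Set.range S.x := hwx
      have ht0U : tr S w ∈ UU I T := by
        rw [hUeq]
        exact Finset.mem_image.mpr ⟨w, Finset.mem_filter.mpr ⟨Finset.mem_univ _, hwc⟩, rfl⟩
      have hnr : ∀ j ∈ I, tr S w ≠ T j := by
        intro j hj he
        have hjn : j < n := Finset.mem_range.mp hj
        rw [show T j = tr S (S.y ⟨j, hjn⟩) from by simp only [hT, dif_pos hjn]] at he
        exact hwny ⟨⟨j, hjn⟩, (tr_inj S _ _ he).symm⟩
      have hwU : tr S w0 ∈ UU I T := by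
        rw [hUeq]
        exact Finset.mem_image.mpr ⟨w0, Finset.mem_filter.mpr ⟨Finset.mem_univ _, hw0c⟩, rfl⟩
      have hcw : isChild (tr S w) (tr S w0) := by
        obtain ⟨p, q, hpq, hp, hq, henum, he⟩ := tr_node S w0 hw0c
        rw [he]
        rcases henum w hw0 with rfl | rfl
        · simp [isChild, children]
        · simp [isChild, children]
      have huniq' : ∀ s ∈ UU I T, isChild (tr S w) s → s = tr S w0 := by
        intro s hs hcs
        rw [hUeq] at hs
        obtain ⟨u, hu, rfl⟩ := Finset.mem_image.mp hs
        have hu' : u ∉ Set.range S.x := (Finset.mem_filter.mp hu).2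
        obtain ⟨p, q, hpq, hp, hq, henum, he⟩ := tr_node S u hu'
        rw [he] at hcs
        have : tr S w = tr S p ∨ tr S w = tr S q := by
          simpa [isChild, children, eq_comm] using hcs
        have hwu : S.edge w u := by
          rcases this with h | h
          · rw [tr_inj S _ _ h]; exact hp
          · rw [tr_inj S _ _ h]; exact hq
        rw [huniq u hwu]
      have := unary_lb n I T hIcard hn hval (tr S w) (tr S w0) ht0U hnr hwU hcw huniq'
      omega
  -- the total out-degree equals twice the number of computation nodes
  have hsum1 : ∑ u, idg S u = 2 * comp'.card := by
    rw [← Finset.sum_filter_add_sum_filter_not Finset.univ (fun v => v ∉ Set.range S.x) (idg S)]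
    have h1 : ∑ u ∈ comp', idg S u = 2 * comp'.card := by
      rw [Finset.sum_congr rfl (fun u hu => idg_comp S (Finset.mem_filter.mp hu).2)]
      rw [Finset.sum_const, smul_eq_mul]
      ring
    have h2 : ∑ u ∈ Finset.univ.filter (fun v => ¬ v ∉ Set.range S.x), idg S u = 0 := by
      apply Finset.sum_eq_zero
      intro u hu
      have := (Finset.mem_filter.mp hu).2
      push_neg at this
      exact idg_input S this
    rw [h1, h2]
    omega
  have hsum2 : ∑ u ∈ NS, od S u = 2 * comp'.card := by
    have hsp := Finset.sum_filter_add_sum_filter_not Finset.univ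
      (fun v => v ∉ Set.range S.y) (od S)
    have h2 : ∑ u ∈ Finset.univ.filter (fun v => ¬ v ∉ Set.range S.y), od S u = 0 := by
      apply Finset.sum_eq_zero
      intro u hu
      have := (Finset.mem_filter.mp hu).2
      push_neg at this
      exact od_sink S this
    have htot : ∑ u, od S u = 2 * comp'.card := by
      rw [sum_od_eq_sum_idg]
      exact hsum1
    rw [h2, add_zero, htot] at hsp
    exact hsp
  have hNScard : NS.card = comp'.card := by
    have h1 := Finset.card_filter_add_card_filter_not
      (s := Finset.univ (α := S.V)) (p := fun v => v ∉ Set.range S.y)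
    have h2 := Finset.card_filter_add_card_filter_not
      (s := Finset.univ (α := S.V)) (p := fun v => v ∉ Set.range S.x)
    have h3 : (Finset.univ.filter (fun v : S.V => ¬ v ∉ Set.range S.y)).card = n := by
      refine Eq.trans ?_ (card_filter_range_y S)
      congr 1
      ext u
      simp
    have h4 : (Finset.univ.filter (fun v : S.V => ¬ v ∉ Set.range S.x)).card = n := by
      refine Eq.trans ?_ (card_filter_range_x S)
      congr 1
      ext u
      simp
    show (Finset.univ.filter (fun v : S.V => v ∉ Set.range S.y)).card =
      (Finset.univ.filter (fun v : S.V => v ∉ Set.range S.x)).card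
    omega
  -- conclude
  have hvNS : v ∈ NS := Finset.mem_filter.mpr ⟨Finset.mem_univ _, hv⟩
  have hodv : od S v = 2 := by
    by_contra hne
    have h3 : 3 ≤ od S v := by
      have := hod2 v hvNS
      omega
    have hlt : ∑ _u ∈ NS, 2 < ∑ u ∈ NS, od S u :=
      Finset.sum_lt_sum (fun u hu => hod2 u hu) ⟨v, hvNS, by omega⟩
    rw [Finset.sum_const, smul_eq_mul, hsum2] at hlt
    omega
  rw [ncard_eq_filter]
  exact hodv

/-- In any complexity-optimal structure `S ∈ 𝒮_n^co` (one with exactly `3n - 6`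
computation nodes), every non-sink node has exactly two outgoing edges. -/
theorem co_outdegree_two (n : ℕ) (hn : 3 ≤ n) (S : YStruct n)
    (hco : S.complexity = 3 * n - 6) (v : S.V) (hv : v ∉ Set.range S.y) :
    {u | S.edge v u}.ncard = 2 :=
  co_outdegree_two' n hn S hco v hv
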